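/- arXiv:1801.00616 — 2 statements merged into one kernel-verified Lean document; each statement's English description precedes it below -/
import Mathlib

section
/- For a mixed base β = (β_0, β_1, ...) with each β_L ≥ 2, and nonnegative integers n and h, define r(n,h) = (n + h) ⊖ (n ⊕ h), where ⊕ is digit-wise addition modulo β_L in base β and ⊖ digit-wise subtraction. Then for every digit index L, the L-th digit of r(n,h) in base β is either 0 or 1. -/
open scoped BigOperators

/-- β̂_L = β_0 ⋯ β_{L-1}, the place value of digit L in mixed base β. -/
def bhat (β : ℕ → ℕ) (L : ℕ) : ℕ := ∏ i ∈ Finset.range L, β i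

/-- The L-th digit of n in the mixed base β. -/
def mdigit (β : ℕ → ℕ) (n L : ℕ) : ℕ := n / bhat β L % β L

/-- Digit-wise addition modulo β_L in mixed base β. -/
def moplus (β : ℕ → ℕ) (n h : ℕ) : ℕ :=
  ∑ L ∈ Finset.range (n + h + 1), ((mdigit β n L + mdigit β h L) % β L) * bhat β L

/-- Digit-wise subtraction modulo β_L in mixed base β. -/
def mominus (β : ℕ → ℕ) (n h : ℕ) : ℕ :=
  ∑ L ∈ Finset.range (n + h + 1), ((β L + mdigit β n L - mdigit β h L) % β L) * bhat β L

/-- σ_β(X) = x^0 ⊕ ⋯ ⊕ x^{m-1}: the digit-wise Nim sum in mixed base β. -/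
def msigma (β : ℕ → ℕ) {m : ℕ} (X : Fin m → ℕ) : ℕ :=
  ∑ L ∈ Finset.range (∑ i, X i + 1), ((∑ i, mdigit β (X i) L) % β L) * bhat β L

/-- Hamming weight: number of nonzero components. -/
def hamwt {m : ℕ} (C : Fin m → ℕ) : ℕ := (Finset.univ.filter (fun i => C i ≠ 0)).card

/-- ord_β(n): the largest L with β̂_L ∣ n (⊤ for n = 0). -/
def mord (β : ℕ → ℕ) (n : ℕ) : ℕ∞ :=
  if n = 0 then ⊤ else (Nat.findGreatest (fun L => bhat β L ∣ n) n : ℕ∞)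

/-- 𝒞 is a Sprague-Grundy system of σ_β: its members are nonzero moves and
σ_β satisfies the mex recursion of the take-away game Γ(ℕ^m, 𝒞), i.e. σ_β is the
Sprague-Grundy function of that game. -/
def IsSGSystem (β : ℕ → ℕ) {m : ℕ} (𝒞 : Set (Fin m → ℕ)) : Prop :=
  (∀ C ∈ 𝒞, C ≠ 0) ∧
  ∀ X : Fin m → ℕ, msigma β X =
    sInf {n : ℕ | ∀ C ∈ 𝒞, (∀ i, C i ≤ X i) → msigma β (fun i => X i - C i) ≠ n}

/-!
Digit `L` of `n + h` is `n_L + h_L + c_L mod β_L`, where the carry `c_L ∈ {0, 1}` into position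
`L` is `1` exactly when `(n mod β̂_L) + (h mod β̂_L) ≥ β̂_L`. Digit `L` of `n ⊕ h` is
`n_L + h_L mod β_L`, so digit `L` of `(n + h) ⊖ (n ⊕ h)` is `c_L`.
-/

open Finset

theorem Nat.add_mod_sub_mod_eq_of_lt {q c : ℕ} (s : ℕ) (hc : c < q) :
    (q + (s + c) % q - s % q) % q = c := by
  have hs : s % q ≤ q := (Nat.mod_lt _ (by omega)).le
  refine Eq.trans (Nat.ModEq.add_right_cancel' (s % q) ?_) (Nat.mod_eq_of_lt hc)
  calc q + (s + c) % q - s % q + s % q = q + (s + c) % q := by omega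
    _ ≡ 0 + (s + c) [MOD q] := (Nat.modEq_zero_iff_dvd.mpr dvd_rfl).add (Nat.mod_modEq _ _)
    _ = s + c := zero_add _
    _ ≡ s % q + c [MOD q] := (Nat.mod_modEq _ _).symm.add_right _
    _ = c + s % q := add_comm _ _

theorem bhat_zero (β : ℕ → ℕ) : bhat β 0 = 1 := prod_range_zero β

theorem bhat_succ (β : ℕ → ℕ) (L : ℕ) : bhat β (L + 1) = bhat β L * β L :=
  prod_range_succ β L

theorem bhat_pos {β : ℕ → ℕ} (hβ : ∀ L, 0 < β L) (L : ℕ) : 0 < bhat β L :=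
  prod_pos fun i _ => hβ i

theorem bhat_dvd_bhat (β : ℕ → ℕ) {M L : ℕ} (h : M ≤ L) : bhat β M ∣ bhat β L :=
  prod_dvd_prod_of_subset _ _ β (range_subset_range.mpr h)

theorem lt_bhat {β : ℕ → ℕ} (hβ : ∀ L, 2 ≤ β L) {n L : ℕ} (h : n ≤ L) : n < bhat β L :=
  calc n < 2 ^ n := Nat.lt_two_pow_self
    _ ≤ 2 ^ L := Nat.pow_le_pow_right two_pos h
    _ = ∏ _i ∈ range L, 2 := by rw [prod_const, card_range]
    _ ≤ bhat β L := prod_le_prod' fun i _ => hβ i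

theorem mdigit_eq_zero_of_lt_bhat {β : ℕ → ℕ} {n L : ℕ} (h : n < bhat β L) :
    mdigit β n L = 0 := by
  rw [mdigit, Nat.div_eq_of_lt h, Nat.zero_mod]

theorem mdigit_eq_zero_of_le {β : ℕ → ℕ} (hβ : ∀ L, 2 ≤ β L) {n L : ℕ} (h : n ≤ L) :
    mdigit β n L = 0 :=
  mdigit_eq_zero_of_lt_bhat (lt_bhat hβ h)

theorem mdigit_eq_mod_div (β : ℕ → ℕ) (n L : ℕ) :
    mdigit β n L = n % bhat β (L + 1) / bhat β L := by
  rw [bhat_succ, Nat.mod_mul_right_div_self, mdigit]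

section DigitSum

variable {β f : ℕ → ℕ}

theorem sum_digits_lt_bhat (hf : ∀ K, f K < β K) (M : ℕ) :
    ∑ K ∈ range M, f K * bhat β K < bhat β M := by
  induction M with
  | zero => simp [bhat_zero]
  | succ M ih =>
    calc ∑ K ∈ range (M + 1), f K * bhat β K
        < bhat β M + f M * bhat β M := by rw [sum_range_succ]; omega
      _ = (f M + 1) * bhat β M := by ring
      _ ≤ β M * bhat β M := Nat.mul_le_mul_right _ (hf M)
      _ = bhat β (M + 1) := by rw [bhat_succ, mul_comm]

theorem sum_digits_mod_bhat (hf : ∀ K, f K < β K) {M N : ℕ} (h : M ≤ N) :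
    (∑ K ∈ range N, f K * bhat β K) % bhat β M = ∑ K ∈ range M, f K * bhat β K := by
  have htail : bhat β M ∣ ∑ K ∈ Ico M N, f K * bhat β K :=
    dvd_sum fun K hK => dvd_mul_of_dvd_right (bhat_dvd_bhat β (mem_Ico.mp hK).1) _
  obtain ⟨t, ht⟩ := htail
  rw [← sum_range_add_sum_Ico _ h, ht, Nat.add_mul_mod_self_left,
    Nat.mod_eq_of_lt (sum_digits_lt_bhat hf M)]

theorem mdigit_sum_digits (hf : ∀ K, f K < β K) {N : ℕ} (hfN : ∀ K, N ≤ K → f K = 0) (L : ℕ) :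
    mdigit β (∑ K ∈ range N, f K * bhat β K) L = f L := by
  have hβ : ∀ K, 0 < β K := fun K => (Nat.zero_le _).trans_lt (hf K)
  rcases lt_or_ge L N with hL | hL
  · rw [mdigit_eq_mod_div, sum_digits_mod_bhat hf hL, sum_range_succ,
      Nat.add_mul_div_right _ _ (bhat_pos hβ L), Nat.div_eq_of_lt (sum_digits_lt_bhat hf L),
      zero_add]
  · rw [hfN L hL]
    apply mdigit_eq_zero_of_lt_bhat
    exact (sum_digits_lt_bhat hf N).trans_le
      (Nat.le_of_dvd (bhat_pos hβ L) (bhat_dvd_bhat β hL))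

end DigitSum

theorem mdigit_moplus {β : ℕ → ℕ} (hβ : ∀ L, 2 ≤ β L) (n h L : ℕ) :
    mdigit β (moplus β n h) L = (mdigit β n L + mdigit β h L) % β L := by
  refine mdigit_sum_digits (fun K => Nat.mod_lt _ (by linarith [hβ K])) (fun K hK => ?_) L
  rw [mdigit_eq_zero_of_le hβ (by omega : n ≤ K), mdigit_eq_zero_of_le hβ (by omega : h ≤ K),
    Nat.zero_mod]

theorem mdigit_mominus {β : ℕ → ℕ} (hβ : ∀ L, 2 ≤ β L) (n h L : ℕ) :
    mdigit β (mominus β n h) L = (β L + mdigit β n L - mdigit β h L) % β L := by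
  refine mdigit_sum_digits (fun K => Nat.mod_lt _ (by linarith [hβ K])) (fun K hK => ?_) L
  rw [mdigit_eq_zero_of_le hβ (by omega : n ≤ K), mdigit_eq_zero_of_le hβ (by omega : h ≤ K),
    add_zero, Nat.sub_zero, Nat.mod_self]

def carry (β : ℕ → ℕ) (n h L : ℕ) : ℕ :=
  if bhat β L ≤ n % bhat β L + h % bhat β L then 1 else 0

theorem carry_eq_zero_or_eq_one (β : ℕ → ℕ) (n h L : ℕ) :
    carry β n h L = 0 ∨ carry β n h L = 1 := by
  unfold carry
  split_ifs <;> simp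

theorem mdigit_add {β : ℕ → ℕ} (hβ : ∀ L, 0 < β L) (n h L : ℕ) :
    mdigit β (n + h) L = (mdigit β n L + mdigit β h L + carry β n h L) % β L := by
  rw [mdigit, Nat.add_div (bhat_pos hβ L)]
  exact ((Nat.mod_modEq _ _).symm.add (Nat.mod_modEq _ _).symm).add_right _

theorem mdigit_mominus_add_moplus {β : ℕ → ℕ} (hβ : ∀ L, 2 ≤ β L) (n h L : ℕ) :
    mdigit β (mominus β (n + h) (moplus β n h)) L = carry β n h L := by
  have hcarry : carry β n h L < β L := by
    rcases carry_eq_zero_or_eq_one β n h L with hc | hc <;> rw [hc] <;> linarith [hβ L]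
  rw [mdigit_mominus hβ, mdigit_moplus hβ, mdigit_add (fun K => by linarith [hβ K]),
    Nat.add_mod_sub_mod_eq_of_lt _ hcarry]

/-- Each digit of the carry sequence r(n,h) = (n+h) ⊖ (n ⊕ h) is 0 or 1. -/
theorem stmt0 (β : ℕ → ℕ) (hβ : ∀ L, 2 ≤ β L) (n h L : ℕ) :
    mdigit β (mominus β (n + h) (moplus β n h)) L = 0 ∨
    mdigit β (mominus β (n + h) (moplus β n h)) L = 1 := by
  rw [mdigit_mominus_add_moplus hβ]
  exact carry_eq_zero_or_eq_one β n h L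
end

section
/- For β = (2,2,2,...) (binary) and m ≥ 1, for every nonzero F ∈ ℕ^m: (x^0+f^0) XOR ... XOR (x^{m-1}+f^{m-1}) ≠ x^0 XOR ... XOR x^{m-1} for all X ∈ ℕ^m if and only if v_2(Σ_i f^i) = min_i v_2(f^i), where v_2 is the 2-adic valuation (v_2(0) = ∞); in particular, if v_2(Σ_i f^i) > min_i v_2(f^i), then there exists X ∈ ℕ^m with XOR of (x^i + f^i) over i equal to XOR of x^i over i. -/
open scoped BigOperators

/-- 2-adic valuation with v₂(0) = ∞. -/
def v2 (n : ℕ) : ℕ∞ := if n = 0 then ⊤ else (padicValNat 2 n : ℕ∞)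

namespace Stmt14Aux

lemma testBit_foldr (l : List ℕ) (L : ℕ) :
    (l.foldr (· ^^^ ·) 0).testBit L =
      decide ((l.map (fun x => x / 2 ^ L)).sum % 2 = 1) := by
  induction l with
  | nil => simp
  | cons a l ih =>
    simp only [List.foldr_cons, Nat.testBit_xor, ih, List.map_cons, List.sum_cons]
    rw [Nat.testBit_eq_decide_div_mod_eq]
    rcases Nat.mod_two_eq_zero_or_one (a / 2 ^ L) with h | h <;>
      rcases Nat.mod_two_eq_zero_or_one (l.map (fun x => x / 2 ^ L)).sum with h' | h' <;>
        simp [Nat.add_mod, h, h']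

lemma testBit_xf {m : ℕ} (g : Fin m → ℕ) (L : ℕ) :
    ((List.ofFn g).foldr (· ^^^ ·) 0).testBit L = decide ((∑ i, g i / 2 ^ L) % 2 = 1) := by
  rw [testBit_foldr]
  have h : ((List.ofFn g).map (fun x => x / 2 ^ L)).sum = ∑ i, g i / 2 ^ L := by
    rw [List.map_ofFn, List.sum_ofFn]; rfl
  rw [h]

lemma xf_eq_iff {m : ℕ} (g h : Fin m → ℕ) :
    (List.ofFn g).foldr (· ^^^ ·) 0 = (List.ofFn h).foldr (· ^^^ ·) 0 ↔
      ∀ L, (∑ i, g i / 2 ^ L) % 2 = (∑ i, h i / 2 ^ L) % 2 := by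
  constructor
  · intro he L
    have hc := congrArg (fun n => Nat.testBit n L) he
    simp only [testBit_xf] at hc
    rcases Nat.mod_two_eq_zero_or_one (∑ i, g i / 2 ^ L) with h1 | h1 <;>
      rcases Nat.mod_two_eq_zero_or_one (∑ i, h i / 2 ^ L) with h2 | h2 <;>
        simp [h1, h2] at hc ⊢
  · intro hp
    apply Nat.eq_of_testBit_eq
    intro L
    rw [testBit_xf, testBit_xf, hp L]

def Good {m : ℕ} (F : Fin m → ℕ) : Prop :=
  ∃ X : Fin m → ℕ, ∀ L, (∑ i, (X i + F i) / 2 ^ L) % 2 = (∑ i, X i / 2 ^ L) % 2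

lemma div_step (M ε L : ℕ) (hε : ε < 2) : (2 * M + ε) / 2 ^ (L + 1) = M / 2 ^ L := by
  rw [pow_succ', ← Nat.div_div_eq_div_mul]
  congr 1
  omega

lemma step {m : ℕ} (F b : Fin m → ℕ)
    (hb : ∀ i, b i = 0 ∨ (b i = 1 ∧ F i % 2 = 1))
    (heven : Even (∑ i, F i))
    (hG : Good (fun i => F i / 2 + b i)) : Good F := by
  obtain ⟨X', hX'⟩ := hG
  refine ⟨fun i => 2 * X' i + b i, fun L => ?_⟩
  cases L with
  | zero =>
    simp only [pow_zero, Nat.div_one]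
    rw [show (∑ i, (2 * X' i + b i + F i)) = (∑ i, (2 * X' i + b i)) + ∑ i, F i by
      rw [← Finset.sum_add_distrib]]
    obtain ⟨c, hc⟩ := heven
    omega
  | succ L =>
    have e1 : ∀ i : Fin m, (2 * X' i + b i + F i) / 2 ^ (L + 1)
        = (X' i + (F i / 2 + b i)) / 2 ^ L := by
      intro i
      rcases hb i with h | ⟨h1, h2⟩
      · rw [show 2 * X' i + b i + F i = 2 * (X' i + (F i / 2 + b i)) + F i % 2 by omega]
        exact div_step _ _ _ (by omega)
      · rw [show 2 * X' i + b i + F i = 2 * (X' i + (F i / 2 + b i)) + 0 by omega]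
        exact div_step _ _ _ (by omega)
    have e2 : ∀ i : Fin m, (2 * X' i + b i) / 2 ^ (L + 1) = X' i / 2 ^ L := by
      intro i
      have hbi : b i < 2 := by rcases hb i with h | ⟨h1, _⟩ <;> omega
      rw [show 2 * X' i + b i = 2 * X' i + b i from rfl]
      exact div_step _ _ _ hbi
    rw [Finset.sum_congr rfl fun i _ => e1 i, Finset.sum_congr rfl fun i _ => e2 i]
    exact hX' L

lemma build {m : ℕ} (n : ℕ) : ∀ (F : Fin m → ℕ) (k : ℕ),
    (∑ i, F i) ≤ n → (∀ i, 2 ^ k ∣ F i) → (∃ i, Odd (F i / 2 ^ k)) →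
    Even (∑ i, F i / 2 ^ k) → Good F := by
  induction n with
  | zero =>
    intro F k hle hdvd hodd heven
    obtain ⟨i, hi⟩ := hodd
    have h1 : F i ≤ ∑ j, F j :=
      Finset.single_le_sum (fun j _ => Nat.zero_le _) (Finset.mem_univ i)
    have h0 : F i = 0 := by omega
    rw [h0, Nat.zero_div] at hi
    simp [Nat.odd_iff] at hi
  | succ n ih =>
    intro F k hle hdvd hodd heven
    have hpos : 0 < ∑ i, F i := by
      obtain ⟨i, hi⟩ := hodd
      have h1 : F i ≤ ∑ j, F j :=
        Finset.single_le_sum (fun j _ => Nat.zero_le _) (Finset.mem_univ i)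
      have h2 : F i ≠ 0 := by
        intro h0; rw [h0, Nat.zero_div] at hi; simp [Nat.odd_iff] at hi
      omega
    match k with
    | k + 1 =>
      have h2 : ∀ i, 2 ∣ F i := fun i =>
        dvd_trans (dvd_pow_self 2 (Nat.succ_ne_zero k)) (hdvd i)
      have hFd : ∀ i, 2 * (F i / 2) = F i := fun i => Nat.mul_div_cancel' (h2 i)
      have hq : ∀ i, F i / 2 / 2 ^ k = F i / 2 ^ (k + 1) := fun i => by
        rw [Nat.div_div_eq_div_mul, ← pow_succ']
      have hdvd' : ∀ i, 2 ^ k ∣ F i / 2 := by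
        intro i
        obtain ⟨t, ht⟩ := hdvd i
        exact ⟨t, by rw [ht, pow_succ', mul_assoc, Nat.mul_div_cancel_left _ two_pos]⟩
      have hsum2 : 2 * (∑ i, F i / 2) = ∑ i, F i := by
        rw [Finset.mul_sum]
        exact Finset.sum_congr rfl fun i _ => hFd i
      apply step F (fun _ => 0) (fun i => Or.inl rfl)
        ⟨∑ i, F i / 2, by omega⟩
      have hfe : (fun i => F i / 2 + 0) = fun i => F i / 2 := by funext i; omega
      rw [hfe]
      apply ih _ k
      · omega
      · exact hdvd'
      · obtain ⟨i, hi⟩ := hodd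
        exact ⟨i, by rw [hq i]; exact hi⟩
      · rw [Finset.sum_congr rfl fun i _ => hq i]
        exact heven
    | 0 =>
      simp only [pow_zero, Nat.div_one] at hodd heven
      obtain ⟨i1, hi1⟩ := hodd
      have ha1 : F i1 % 2 = 1 := Nat.odd_iff.mp hi1
      have hdecomp : ∑ i, F i = 2 * (∑ i, F i / 2) + ∑ i, F i % 2 := by
        rw [Finset.mul_sum, ← Finset.sum_add_distrib]
        exact (Finset.sum_congr rfl fun i _ => (Nat.div_add_mod (F i) 2).symm)
      have hES : (∑ i, F i) % 2 = 0 := Nat.even_iff.mp heven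
      have hEa : (∑ i, F i % 2) % 2 = 0 := by omega
      have herase : ∑ x ∈ Finset.univ.erase i1, F x % 2 + F i1 % 2 = ∑ x : Fin m, F x % 2 :=
        Finset.sum_erase_add Finset.univ (fun i => F i % 2) (Finset.mem_univ i1)
      have hex2 : ∃ i2 ∈ Finset.univ.erase i1, F i2 % 2 ≠ 0 := by
        apply Finset.exists_ne_zero_of_sum_ne_zero
        omega
      obtain ⟨i2, hi2mem, hi2⟩ := hex2
      have hne : i2 ≠ i1 := (Finset.mem_erase.mp hi2mem).1
      have ha2 : F i2 % 2 = 1 := by omega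
      have hSa2 : 2 ≤ ∑ i, F i % 2 := by
        have h2 : F i2 % 2 ≤ ∑ i ∈ Finset.univ.erase i1, F i % 2 :=
          Finset.single_le_sum (f := fun i => F i % 2) (fun j _ => Nat.zero_le _) hi2mem
        omega
      by_cases hbase : ∑ i, F i / 2 = 0
      · refine ⟨fun _ => 0, fun L => ?_⟩
        have hsmall : ∀ i, F i ≤ 1 := by
          intro i
          have h1 : F i / 2 ≤ ∑ j, F j / 2 :=
            Finset.single_le_sum (f := fun j => F j / 2) (fun j _ => Nat.zero_le _)
              (Finset.mem_univ i)
          omega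
        cases L with
        | zero =>
          simp only [pow_zero, Nat.div_one, zero_add]
          simp only [Finset.sum_const_zero]
          omega
        | succ L =>
          have hz : ∀ i : Fin m, (0 + F i) / 2 ^ (L + 1) = 0 := by
            intro i
            apply Nat.div_eq_of_lt
            have h1 := hsmall i
            have h2 : (2:ℕ) ^ 1 ≤ 2 ^ (L + 1) := Nat.pow_le_pow_right (by omega) (by omega)
            omega
          rw [Finset.sum_congr rfl fun i _ => hz i]
          simp
      · -- helper to apply in each case
        have key : ∀ b : Fin m → ℕ, (∀ i, b i = 0 ∨ (b i = 1 ∧ F i % 2 = 1)) →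
            (∑ i, b i) + (∑ i, F i / 2) ≤ n →
            Even ((∑ i, F i / 2) + ∑ i, b i) →
            (∃ j, Odd (F j / 2 + b j)) → Good F := by
          intro b hb hlt hev hex
          apply step F b hb heven
          apply ih _ 0
          · simp only [Finset.sum_add_distrib]
            omega
          · intro i; exact one_dvd _
          · obtain ⟨j, hj⟩ := hex
            exact ⟨j, by simpa using hj⟩
          · simp only [pow_zero, Nat.div_one, Finset.sum_add_distrib]
            exact hev
        have hsum_ite : ∀ i0 : Fin m, (∑ i, if i = i0 then (1:ℕ) else 0) = 1 := by
          intro i0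
          rw [Finset.sum_ite_eq' Finset.univ i0 (fun _ => (1:ℕ))]
          simp
        rcases Nat.even_or_odd (∑ i, F i / 2) with hE | hO
        · by_cases hOx : ∃ j, Odd (F j / 2)
          · -- b = 0
            apply key (fun _ => 0) (fun i => Or.inl rfl)
            · simp only [Finset.sum_const_zero]; omega
            · simpa using hE
            · obtain ⟨j, hj⟩ := hOx; exact ⟨j, by simpa using hj⟩
          · -- all F i / 2 even; b = indicator {i1, i2}
            push_neg at hOx
            have hallE : ∀ j, (F j / 2) % 2 = 0 := fun j =>
              Nat.even_iff.mp (Nat.not_odd_iff_even.mp (hOx j))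
            set b : Fin m → ℕ := fun i => if i = i1 then 1 else if i = i2 then 1 else 0
              with hbdef
            have hbsplit : ∀ i, b i = (if i = i1 then 1 else 0) + (if i = i2 then 1 else 0) := by
              intro i
              by_cases h1 : i = i1
              · subst h1
                simp [hbdef, Ne.symm hne]
              · by_cases h2 : i = i2
                · subst h2
                  simp [hbdef, h1, hne]
                · simp [hbdef, h1, h2]
            have hsb : ∑ i, b i = 2 := by
              rw [Finset.sum_congr rfl fun i _ => hbsplit i, Finset.sum_add_distrib,
                hsum_ite, hsum_ite]
            apply key b
            · intro i
              by_cases h1 : i = i1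
              · right; subst h1; constructor
                · simp [hbdef]
                · exact ha1
              · by_cases h2 : i = i2
                · right; subst h2; constructor
                  · simp [hbdef, h1]
                  · exact ha2
                · left; simp [hbdef, h1, h2]
            · rw [hsb]; omega
            · rw [hsb]
              obtain ⟨c, hc⟩ := hE
              exact ⟨c + 1, by omega⟩
            · refine ⟨i1, ?_⟩
              have : b i1 = 1 := by simp [hbdef]
              rw [this, Nat.odd_iff]
              have := hallE i1
              omega
        · -- Odd sum of halves; single indicator
          have hOS : (∑ i, F i / 2) % 2 = 1 := Nat.odd_iff.mp hO
          rcases Nat.even_or_odd (F i1 / 2) with hi1e | hi1o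
          · -- i0 = i1
            set b : Fin m → ℕ := fun i => if i = i1 then 1 else 0 with hbdef
            apply key b
            · intro i
              by_cases h1 : i = i1
              · right; subst h1; exact ⟨by simp [hbdef], ha1⟩
              · left; simp [hbdef, h1]
            · rw [hbdef, hsum_ite i1]; omega
            · rw [hbdef, hsum_ite i1, Nat.even_iff]; omega
            · refine ⟨i1, ?_⟩
              have hb1 : b i1 = 1 := by simp [hbdef]
              rw [hb1, Nat.odd_iff]
              have := Nat.even_iff.mp hi1e
              omega
          · -- i0 = i2, witness i1
            set b : Fin m → ℕ := fun i => if i = i2 then 1 else 0 with hbdef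
            apply key b
            · intro i
              by_cases h1 : i = i2
              · right; subst h1; exact ⟨by simp [hbdef], ha2⟩
              · left; simp [hbdef, h1]
            · rw [hbdef, hsum_ite i2]; omega
            · rw [hbdef, hsum_ite i2, Nat.even_iff]; omega
            · refine ⟨i1, ?_⟩
              have hb1 : b i1 = 0 := by simp [hbdef, Ne.symm hne]
              rw [hb1, Nat.add_zero]
              exact hi1o

end Stmt14Aux

open Stmt14Aux

/-- Binary case: a nonzero F always changes the XOR of the heaps iff
v₂(Σ f^i) = min_i v₂(f^i). -/
theorem stmt14 {m : ℕ} (hm : 1 ≤ m) (F : Fin m → ℕ) (hF : F ≠ 0) :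
    (∀ X : Fin m → ℕ,
        (List.ofFn (fun i => X i + F i)).foldr (· ^^^ ·) 0 ≠
          (List.ofFn X).foldr (· ^^^ ·) 0) ↔
      v2 (∑ i, F i) = ⨅ i, v2 (F i) := by

  obtain ⟨i0, -, hi0⟩ := Finset.exists_min_image Finset.univ (fun i => v2 (F i))
    ⟨⟨0, hm⟩, Finset.mem_univ _⟩
  have hv2top : ∀ n : ℕ, v2 n = ⊤ ↔ n = 0 := by
    intro n
    unfold v2
    split <;> simp_all
  have hFi0 : F i0 ≠ 0 := by
    intro h0
    apply hF
    funext j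
    have h1 : v2 (F i0) = ⊤ := (hv2top _).mpr h0
    have h2 := hi0 j (Finset.mem_univ j)
    rw [h1, top_le_iff] at h2
    exact (hv2top _).mp h2
  set k := padicValNat 2 (F i0) with hk
  have hv2i0 : v2 (F i0) = (k : ℕ∞) := by unfold v2; rw [if_neg hFi0]
  have hInf : (⨅ i, v2 (F i)) = (k : ℕ∞) := by
    refine le_antisymm (le_trans (iInf_le _ i0) hv2i0.le) (le_iInf fun j => ?_)
    rw [← hv2i0]; exact hi0 j (Finset.mem_univ j)
  have hdvd : ∀ i, 2 ^ k ∣ F i := by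
    intro i
    by_cases h0 : F i = 0
    · simp [h0]
    · have h2 := hi0 i (Finset.mem_univ i)
      rw [hv2i0] at h2
      unfold v2 at h2
      rw [if_neg h0] at h2
      have h3 : k ≤ padicValNat 2 (F i) := by exact_mod_cast h2
      exact dvd_trans (pow_dvd_pow 2 h3) pow_padicValNat_dvd
  have hndvd : ¬ 2 ^ (k + 1) ∣ F i0 := by
    intro h
    have := (padicValNat_dvd_iff_le hFi0).mp h
    omega
  have hFg : ∀ i, 2 ^ k * (F i / 2 ^ k) = F i := fun i => Nat.mul_div_cancel' (hdvd i)
  have hSg : ∑ i, F i = 2 ^ k * ∑ i, F i / 2 ^ k := by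
    rw [Finset.mul_sum]
    exact (Finset.sum_congr rfl fun i _ => (hFg i).symm)
  have hSne : (∑ i, F i) ≠ 0 := by
    have h1 : F i0 ≤ ∑ j, F j :=
      Finset.single_le_sum (fun j _ => Nat.zero_le _) (Finset.mem_univ i0)
    omega
  have hgi0 : Odd (F i0 / 2 ^ k) := by
    rw [Nat.odd_iff]
    rcases Nat.mod_two_eq_zero_or_one (F i0 / 2 ^ k) with h | h
    · exfalso
      apply hndvd
      obtain ⟨c, hc⟩ := Nat.dvd_of_mod_eq_zero h
      exact ⟨c, by rw [← hFg i0, hc, pow_succ]; ring⟩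
    · exact h
  have hpow2k : 2 ^ (k+1) ∣ (∑ i, F i) ↔ Even (∑ i, F i / 2 ^ k) := by
    rw [hSg, pow_succ, Nat.mul_dvd_mul_iff_left (Nat.pow_pos (by norm_num : 0 < 2)),
      Nat.even_iff, Nat.dvd_iff_mod_eq_zero]
  -- RHS ↔ Odd (∑ g)
  have hRHS : (v2 (∑ i, F i) = ⨅ i, v2 (F i)) ↔ Odd (∑ i, F i / 2 ^ k) := by
    rw [hInf]
    unfold v2
    rw [if_neg hSne]
    rw [Nat.cast_inj]
    constructor
    · intro h
      rw [Nat.odd_iff]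
      rcases Nat.mod_two_eq_zero_or_one (∑ i, F i / 2 ^ k) with he | he
      · exfalso
        have hev : Even (∑ i, F i / 2 ^ k) := Nat.even_iff.mpr he
        have := (padicValNat_dvd_iff_le hSne).mp (hpow2k.mpr hev)
        omega
      · exact he
    · intro hodd
      have h1 : k ≤ padicValNat 2 (∑ i, F i) :=
        (padicValNat_dvd_iff_le hSne).mp (hSg ▸ Dvd.intro _ rfl)
      have h2 : ¬ (k + 1 ≤ padicValNat 2 (∑ i, F i)) := by
        intro hc
        have := hpow2k.mp ((padicValNat_dvd_iff_le hSne).mpr hc)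
        rw [Nat.even_iff] at this
        rw [Nat.odd_iff] at hodd
        omega
      omega
  rw [hRHS]
  constructor
  · -- (∀ X, ≠) → Odd
    intro hall
    rw [Nat.odd_iff]
    rcases Nat.mod_two_eq_zero_or_one (∑ i, F i / 2 ^ k) with he | he
    · exfalso
      have hev : Even (∑ i, F i / 2 ^ k) := Nat.even_iff.mpr he
      obtain ⟨X, hX⟩ := build (∑ i, F i) F k (le_refl _) hdvd ⟨i0, hgi0⟩ hev
      exact hall X ((xf_eq_iff _ _).mpr hX)
    · exact he
  · -- Odd → ∀ X, ≠
    intro hodd X heq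
    have hL := (xf_eq_iff _ _).mp heq k
    have hterm : ∀ i : Fin m, (X i + F i) / 2 ^ k = X i / 2 ^ k + F i / 2 ^ k := by
      intro i
      conv_lhs => rw [← hFg i]
      exact Nat.add_mul_div_left _ _ (Nat.pow_pos (by norm_num : 0 < 2))
    rw [Finset.sum_congr rfl fun i _ => hterm i, Finset.sum_add_distrib] at hL
    rw [Nat.odd_iff] at hodd
    omega
end
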